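/- A directed graph G with no isolated vertices has a Γ-irregular labeling if and only if there exists an injective map φ : V(G) → Γ such that Σ_{x ∈ C} φ(x) = 0 for every weakly connected component C of G. -/

import Mathlib

open Finset

/-- Weak reachability in a digraph: the reflexive-transitive closure of the
symmetrized adjacency relation. The weakly connected component of `x` is
`{y | WReach Adj x y}`. -/
def WReach {V : Type*} (Adj : V → V → Prop) : V → V → Prop :=
  Relation.ReflTransGen (fun a b => Adj a b ∨ Adj b a)

/-- The induced vertex map `φ_ψ` of an arc labeling `ψ`:
`φ_ψ(x) = Σ_{y ∈ N⁺(x)} ψ(x,y) − Σ_{y ∈ N⁻(x)} ψ(y,x)`. -/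
def vertexSum {V Γ : Type*} [Fintype V] [AddCommGroup Γ]
    (Adj : V → V → Prop) [DecidableRel Adj] (ψ : V → V → Γ) (x : V) : Γ :=
  (∑ y ∈ univ.filter (fun y => Adj x y), ψ x y)
    - (∑ y ∈ univ.filter (fun y => Adj y x), ψ y x)

/-- `G` is realizable in `Γ`: there is a `Γ`-irregular arc labeling, i.e. one whose
induced vertex map is injective. -/
def Realizable {V : Type*} [Fintype V] (Adj : V → V → Prop) [DecidableRel Adj]
    (Γ : Type*) [AddCommGroup Γ] : Prop :=
  ∃ ψ : V → V → Γ, Function.Injective (vertexSum Adj ψ)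

/-! `ψ ↦ φ_ψ` is additive, so the vertex maps of labelings form the range of a group
homomorphism, and the theorem says this range is the set of maps summing to zero on every weak
component. A component is closed under arcs, so each arc label enters its sum once with each
sign. Conversely, an arc `a → b` labelled `g` yields `g` at `a` and `-g` at `b`; chaining arcs
along a weak path gives the same for any two vertices of a component, and a zero-sum map is a
sum of such dipoles, each moving the value at a vertex to a fixed representative of its
component. -/

theorem WReach.symm {V : Type*} {Adj : V → V → Prop} {a b : V} (h : WReach Adj a b) :
    WReach Adj b a :=
  haveI : Std.Symm fun a b => Adj a b ∨ Adj b a := ⟨fun _ _ => Or.symm⟩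
  Std.Symm.symm (r := Relation.ReflTransGen _) _ _ h

def WReach.setoid {V : Type*} (Adj : V → V → Prop) : Setoid V where
  r := WReach Adj
  iseqv := ⟨fun _ => .refl, WReach.symm, .trans⟩

section

variable {V Γ : Type*} [Fintype V] [AddCommGroup Γ]

theorem AddSubgroup.mem_of_sum_filter_setoid_eq_zero [DecidableEq V] (s : Setoid V)
    [DecidableRel s.r] {H : AddSubgroup (V → Γ)}
    (hH : ∀ a b g, s.r a b → Pi.single a g - Pi.single b g ∈ H) {φ : V → Γ}
    (hφ : ∀ x, ∑ y ∈ univ.filter (s.r x), φ y = 0) : φ ∈ H := by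
  let r : V → V := fun x => (Quotient.mk s x).out
  have hr : ∀ x, s.r x (r x) := fun x => s.symm (Quotient.mk_out x)
  have hr_eq : ∀ x y, r y = r x ↔ s.r x y := fun x y =>
    Quotient.out_inj.trans (Quotient.eq.trans ⟨s.symm, s.symm⟩)
  have hfiber : ∀ x, ∑ y ∈ univ.filter (r · = x), φ y = 0 := by
    intro x
    rcases (univ.filter (r · = x)).eq_empty_or_nonempty with h | ⟨y₀, hy₀⟩
    · rw [h, sum_empty]
    · obtain rfl : r y₀ = x := (mem_filter.mp hy₀).2
      simpa only [hr_eq] using hφ y₀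
  have hrest : ∑ y, (Pi.single (r y) (φ y) : V → Γ) = 0 := by
    ext x
    simpa [Finset.sum_apply, Pi.single_apply, Finset.sum_ite, eq_comm] using hfiber x
  have hdecomp : φ = ∑ y, (Pi.single y (φ y) - Pi.single (r y) (φ y)) := by
    rw [sum_sub_distrib, hrest, sub_zero, univ_sum_single]
  rw [hdecomp]
  exact sum_mem fun y _ => hH _ _ _ (hr y)

variable (Adj : V → V → Prop) [DecidableRel Adj]

theorem sum_vertexSum_eq_zero_of_closed (ψ : V → V → Γ) {s : Finset V}
    (hs : ∀ a b, Adj a b → (a ∈ s ↔ b ∈ s)) :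
    ∑ x ∈ s, vertexSum Adj ψ x = 0 := by
  simp only [vertexSum, sum_sub_distrib, sub_eq_zero]
  refine Finset.sum_comm' fun x y => ?_
  simp only [mem_filter, mem_univ, true_and]
  exact ⟨fun ⟨hx, h⟩ => ⟨h, (hs x y h).1 hx⟩, fun ⟨h, hy⟩ => ⟨(hs x y h).2 hy, h⟩⟩

def vertexSumHom : (V → V → Γ) →+ (V → Γ) where
  toFun := vertexSum Adj
  map_zero' := by ext; simp [vertexSum]
  map_add' ψ₁ ψ₂ := by
    ext x
    simp only [vertexSum, Pi.add_apply, sum_add_distrib]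
    abel

theorem vertexSum_single_single [DecidableEq V] {a b : V} (hab : Adj a b) (g : Γ) :
    vertexSum Adj (Pi.single a (Pi.single b g)) = Pi.single a g - Pi.single b g := by
  ext x
  simp only [vertexSum, Pi.single_apply, ite_apply, Pi.zero_apply, Pi.sub_apply, sum_ite_eq',
    mem_filter, mem_univ, true_and]
  congr 1 <;> split_ifs <;> simp_all

theorem single_sub_single_mem_range_vertexSumHom [DecidableEq V] {a b : V}
    (h : WReach Adj a b) (g : Γ) :
    (Pi.single a g - Pi.single b g : V → Γ) ∈ (vertexSumHom Adj).range := by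
  induction h with
  | refl => rw [sub_self]; exact zero_mem _
  | @tail c d _ hcd ih =>
    rw [← sub_add_sub_cancel _ (Pi.single c g)]
    refine add_mem ih ?_
    rcases hcd with hcd | hdc
    · exact ⟨_, vertexSum_single_single Adj hcd g⟩
    · rw [← neg_sub]
      exact neg_mem ⟨_, vertexSum_single_single Adj hdc g⟩

theorem mem_range_vertexSumHom_iff [DecidableRel (WReach Adj)] {φ : V → Γ} :
    φ ∈ (vertexSumHom Adj).range ↔ ∀ x, ∑ y ∈ univ.filter (WReach Adj x), φ y = 0 := by
  classical
  constructor
  · rintro ⟨ψ, rfl⟩ x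
    refine sum_vertexSum_eq_zero_of_closed Adj ψ fun a b hab => ?_
    simp only [mem_filter, mem_univ, true_and]
    exact ⟨fun h => h.tail (.inl hab), fun h => h.tail (.inr hab)⟩
  · intro hφ
    refine AddSubgroup.mem_of_sum_filter_setoid_eq_zero (WReach.setoid Adj)
      (fun _ _ g h => single_sub_single_mem_range_vertexSumHom Adj h g) fun x => ?_
    convert hφ x
    exact .rfl

end

theorem stmt_8_general {V Γ : Type*} [Fintype V] [AddCommGroup Γ]
    (Adj : V → V → Prop) [DecidableRel Adj] :
    (∃ ψ : V → V → Γ, Function.Injective (vertexSum Adj ψ)) ↔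
      (∃ φ : V → Γ, Function.Injective φ ∧
        ∀ x : V, ∑ᶠ y ∈ {y | WReach Adj x y}, φ y = 0) := by
  classical
  have hcomp : ∀ (φ : V → Γ) x, ∑ᶠ y ∈ {y | WReach Adj x y}, φ y
      = ∑ y ∈ univ.filter (WReach Adj x), φ y := fun φ x => by
    rw [finsum_mem_eq_toFinset_sum, Set.toFinset_ofPred]
  simp only [hcomp, ← mem_range_vertexSumHom_iff]
  constructor
  · rintro ⟨ψ, hψ⟩
    exact ⟨_, hψ, ψ, rfl⟩
  · rintro ⟨_, hφ, ψ, rfl⟩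
    exact ⟨ψ, hφ⟩

/-- Lemma (Cichacz–Tuza): a digraph with no isolated vertices has a `Γ`-irregular labeling
iff there is an injection `φ : V → Γ` whose values sum to `0` on every weakly connected
component. -/
theorem stmt_8 {V Γ : Type*} [Fintype V] [AddCommGroup Γ]
    (Adj : V → V → Prop) [DecidableRel Adj]
    (hiso : ∀ x : V, ∃ y : V, Adj x y ∨ Adj y x) :
    (∃ ψ : V → V → Γ, Function.Injective (vertexSum Adj ψ)) ↔
      (∃ φ : V → Γ, Function.Injective φ ∧
        ∀ x : V, ∑ᶠ y ∈ {y | WReach Adj x y}, φ y = 0) :=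
  stmt_8_general Adj
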